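/- Let G=(V,E) be a directed graph, v₀ ∈ V and b ∈ ℕ with b ≥ 1. Then Live_b(E,v₀) holds (the runner has a winning strategy in the turn-based liveness sabotage game LSG (G,v₀,b), i.e. she can guarantee making at least b moves) if and only if there exists a positional strategy σ_r for the runner in S^tb(G) such that every play λ of S^tb(G) from ((E,v₀),r) consistent with σ_r contains at least 2b states (i.e., the state λ[2b−1] exists). -/
import Mathlib


/-- A sabotage game-state: the set of remaining edges together with the runner's position. -/
abbrev GState (V : Type*) := Finset (V × V) × V

/-- The two agents: runner and demon. -/
inductive Agent : Type
  | r : Agent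
  | d : Agent
deriving DecidableEq

/-- A state of the turn-based sabotage game structure: a game-state plus the agent owning it. -/
abbrev TbState (V : Type*) := GState V × Agent

section Defs

variable {V : Type*} [DecidableEq V]

/-- Runner's available actions in the turn-based structure (`none` is skip). -/
def tbActR (s : TbState V) : Set (Option (V × V)) :=
  match s.2 with
  | Agent.r => {a | ∃ e ∈ s.1.1, e.1 = s.1.2 ∧ a = some e}
  | Agent.d => {none}

/-- Demon's available actions in the turn-based structure (`none` is skip). -/
def tbActD (s : TbState V) : Set (Option (V × V)) :=
  match s.2 with
  | Agent.r => {none}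
  | Agent.d => {a | ∃ e ∈ s.1.1, a = some e}

/-- Transition function of the turn-based sabotage game structure. -/
def tbDelta (s : TbState V) (ar ad : Option (V × V)) : TbState V :=
  match ar, ad with
  | some e, _ => ((s.1.1, e.2), Agent.d)
  | none, some e => ((s.1.1.erase e, s.1.2), Agent.r)
  | none, none => s

/-- `t` arises from `s` in the turn-based structure by the available action pair `(ar, ad)`. -/
def tbStepBy (s : TbState V) (ar ad : Option (V × V)) (t : TbState V) : Prop :=
  ar ∈ tbActR s ∧ ad ∈ tbActD s ∧ t = tbDelta s ar ad

/-- One-step transition relation of the turn-based structure. -/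
def tbStep (s t : TbState V) : Prop := ∃ ar ad, tbStepBy s ar ad t

/-- Runner's available actions in the concurrent structure. -/
def conActR (s : GState V) : Set (V × V) := {e | e ∈ s.1 ∧ e.1 = s.2}

/-- Demon's available actions in the concurrent structure. -/
def conActD (s : GState V) : Set (V × V) := {e | e ∈ s.1}

/-- Transition function of the concurrent sabotage game structure. -/
def conDelta (s : GState V) (er ed : V × V) : GState V :=
  if er = ed then s else (s.1.erase ed, er.2)

/-- `t` arises from `s` in the concurrent structure by the available action pair `(er, ed)`. -/
def conStepBy (s : GState V) (er ed : V × V) (t : GState V) : Prop :=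
  er ∈ s.1 ∧ er.1 = s.2 ∧ ed ∈ s.1 ∧ t = conDelta s er ed

/-- One-step transition relation of the concurrent structure. -/
def conStep (s t : GState V) : Prop := ∃ er ed, conStepBy s er ed t

/-- Runner's available actions in the general structure (`none` is skip, always available). -/
def genActR (s : GState V) : Set (Option (V × V)) :=
  {a | a = none ∨ ∃ e ∈ s.1, e.1 = s.2 ∧ a = some e}

/-- Demon's available actions in the general structure (`none` is skip, always available). -/
def genActD (s : GState V) : Set (Option (V × V)) :=
  {a | a = none ∨ ∃ e ∈ s.1, a = some e}

/-- Transition function of the general sabotage game structure. -/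
def genDelta (s : GState V) (ar ad : Option (V × V)) : GState V :=
  match ar, ad with
  | none, none => s
  | none, some ed => (s.1.erase ed, s.2)
  | some er, none => (s.1, er.2)
  | some er, some ed => if er = ed then s else (s.1.erase ed, er.2)

/-- `t` arises from `s` in the general structure by the available action pair `(ar, ad)`. -/
def genStepBy (s : GState V) (ar ad : Option (V × V)) (t : GState V) : Prop :=
  ar ∈ genActR s ∧ ad ∈ genActD s ∧ t = genDelta s ar ad

/-- One-step transition relation of the general structure. -/
def genStep (s t : GState V) : Prop := ∃ ar ad, genStepBy s ar ad t

/-- A (finite or infinite) play: a maximal sequence of states starting at `s₀`, where each state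
arises from its predecessor by the step relation. `p n = none` means the play has already ended. -/
def IsPlay {S : Type*} (step : S → S → Prop) (s₀ : S) (p : ℕ → Option S) : Prop :=
  p 0 = some s₀ ∧
  (∀ n t, p (n + 1) = some t → ∃ s, p n = some s ∧ step s t) ∧
  (∀ n s, p n = some s → (∃ t, step s t) → (p (n + 1)).isSome)

/-- The structural label of a game-state `(E', v)`: the proposition `p_v` (coded `Sum.inl v`)
together with the propositions `q_e` for `e ∈ E'` (coded `Sum.inr e`). -/
def label (s : GState V) : Set (V ⊕ (V × V)) :=
  {x | x = Sum.inl s.2 ∨ ∃ e ∈ s.1, x = Sum.inr e}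

/-- `σ` is a positional runner strategy in the turn-based structure. -/
def TbStratR (σ : TbState V → Option (V × V)) : Prop :=
  ∀ s, (tbActR s).Nonempty → σ s ∈ tbActR s

/-- `σ` is a positional demon strategy in the turn-based structure. -/
def TbStratD (σ : TbState V → Option (V × V)) : Prop :=
  ∀ s, (tbActD s).Nonempty → σ s ∈ tbActD s

/-- The play `p` is consistent with the runner strategy `σ` in the turn-based structure. -/
def TbConsR (σ : TbState V → Option (V × V)) (p : ℕ → Option (TbState V)) : Prop :=
  ∀ n s t, p n = some s → p (n + 1) = some t → ∃ ad, tbStepBy s (σ s) ad t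

/-- The play `p` is consistent with the demon strategy `σ` in the turn-based structure. -/
def TbConsD (σ : TbState V → Option (V × V)) (p : ℕ → Option (TbState V)) : Prop :=
  ∀ n s t, p n = some s → p (n + 1) = some t → ∃ ar, tbStepBy s ar (σ s) t

/-- The play `p` is consistent with both strategies in the turn-based structure. -/
def TbConsRD (σr σd : TbState V → Option (V × V)) (p : ℕ → Option (TbState V)) : Prop :=
  ∀ n s t, p n = some s → p (n + 1) = some t → tbStepBy s (σr s) (σd s) t

/-- `σ` is a positional runner strategy in the concurrent structure. -/
def ConStratR (σ : GState V → V × V) : Prop :=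
  ∀ s, (conActR s).Nonempty → σ s ∈ conActR s

/-- `σ` is a positional demon strategy in the concurrent structure. -/
def ConStratD (σ : GState V → V × V) : Prop :=
  ∀ s, (conActD s).Nonempty → σ s ∈ conActD s

/-- The play `p` is consistent with both strategies in the concurrent structure. -/
def ConConsRD (σr σd : GState V → V × V) (p : ℕ → Option (GState V)) : Prop :=
  ∀ n s t, p n = some s → p (n + 1) = some t → conStepBy s (σr s) (σd s) t

/-- Runner has a winning strategy in the turn-based reachability sabotage game with goal `vg`,
from the game-state `(E', v)`. -/
def Reach (vg : V) (E' : Finset (V × V)) (v : V) : Prop :=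
  v = vg ∨ ∃ e ∈ E', e.1 = v ∧ ∀ f ∈ E', Reach vg (E'.erase f) e.2
termination_by E'.card
decreasing_by exact Finset.card_erase_lt_of_mem (by assumption)

/-- Runner has a winning strategy in the turn-based liveness sabotage game with liveness
parameter `b ≥ 1`, from the game-state `(E', v)`. -/
def Live : ℕ → Finset (V × V) → V → Prop
  | 0, _, _ => True
  | 1, E', v => ∃ e ∈ E', e.1 = v
  | n + 2, E', v => ∃ e ∈ E', e.1 = v ∧ ∀ f ∈ E', Live (n + 1) (E'.erase f) e.2

end Defs

/-- Formulas of sabotage modal logic over a set `P` of propositions. -/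
inductive SML (P : Type*) : Type _
  | top : SML P
  | atom : P → SML P
  | neg : SML P → SML P
  | and : SML P → SML P → SML P
  | dia : SML P → SML P
  | sab : SML P → SML P

namespace SML
/-- Disjunction. -/
def or {P : Type*} (φ ψ : SML P) : SML P := .neg (.and (.neg φ) (.neg ψ))
/-- Box. -/
def box {P : Type*} (φ : SML P) : SML P := .neg (.dia (.neg φ))
/-- Sabotage box `■`. -/
def sabBox {P : Type*} (φ : SML P) : SML P := .neg (.sab (.neg φ))
end SML

/-- Truth of an SML formula at world `w` of the sabotage model `(W, R, Val)`. -/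
def Sat {W P : Type*} [DecidableEq W] (Val : P → Set W) :
    SML P → Finset (W × W) → W → Prop
  | .top, _, _ => True
  | .atom q, _, w => w ∈ Val q
  | .neg φ, R, w => ¬ Sat Val φ R w
  | .and φ ψ, R, w => Sat Val φ R w ∧ Sat Val ψ R w
  | .dia φ, R, w => ∃ u, (w, u) ∈ R ∧ Sat Val φ R u
  | .sab φ, R, w => ∃ x ∈ R, Sat Val φ (R.erase x) w

/-- The formulas `ρ₀ := g`, `ρ_{n+1} := g ∨ ◇■ρ_n`, over the single proposition `g`. -/
def rho : ℕ → SML Unit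
  | 0 => .atom ()
  | n + 1 => SML.or (.atom ()) (.dia (SML.sabBox (rho n)))

/-- The formulas `γ₁ := ◇⊤`, `γ_{n+1} := ◇■γ_n` (the value at `0` is a dummy). -/
def gamma : ℕ → SML Unit
  | 0 => .top
  | 1 => .dia .top
  | n + 2 => .dia (SML.sabBox (gamma (n + 1)))

section Aux

variable {V : Type*} [DecidableEq V]

open Classical

lemma live_succ (n : ℕ) (E' : Finset (V × V)) (v : V) :
    Live (n + 1) E' v ↔ ∃ e ∈ E', e.1 = v ∧ ∀ f ∈ E', Live n (E'.erase f) e.2 := by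
  cases n with
  | zero => simp [Live]
  | succ m => rfl

lemma live_mono : ∀ (n : ℕ) (E' : Finset (V × V)) (v : V), Live (n + 1) E' v → Live n E' v := by
  intro n
  induction n with
  | zero => intro _ _ _; trivial
  | succ m ih =>
    intro E' v h
    rw [live_succ] at h ⊢
    obtain ⟨e, he, hev, hf⟩ := h
    exact ⟨e, he, hev, fun f hf' => ih _ _ (hf f hf')⟩

lemma live_le {m n : ℕ} (h : m ≤ n) : ∀ (E' : Finset (V × V)) (v : V), Live n E' v → Live m E' v := by
  induction h with
  | refl => intro _ _ h; exact h
  | step _ ih => intro E' v hl; exact ih _ _ (live_mono _ _ _ hl)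

lemma live_card : ∀ (n : ℕ) (E' : Finset (V × V)) (v : V), Live n E' v → n ≤ E'.card := by
  intro n
  induction n with
  | zero => intro _ _ _; exact Nat.zero_le _
  | succ m ih =>
    intro E' v h
    rw [live_succ] at h
    obtain ⟨e, he, _, hf⟩ := h
    have h1 := ih _ _ (hf e he)
    have hc := Finset.card_erase_of_mem he
    have : 0 < E'.card := Finset.card_pos.2 ⟨e, he⟩
    omega

/-- The largest `n` (bounded by the number of remaining edges) such that `Live n` holds. -/
noncomputable def rank (s : GState V) : ℕ :=
  Nat.findGreatest (fun n => Live n s.1 s.2) s.1.card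

lemma rank_live (s : GState V) : Live (rank s) s.1 s.2 := by
  unfold rank
  exact Nat.findGreatest_spec (P := fun n => Live n s.1 s.2) (m := 0) (Nat.zero_le _) trivial

lemma le_rank {m : ℕ} {s : GState V} (h : Live m s.1 s.2) : m ≤ rank s := by
  unfold rank
  exact Nat.le_findGreatest (live_card m s.1 s.2 h) h

/-- The runner's positional strategy extracted from the `Live` predicate. -/
noncomputable def liveStrat : TbState V → Option (V × V)
  | ((E', v), Agent.d) => none
  | ((E', v), Agent.r) =>
    if h : ∃ e ∈ E', e.1 = v ∧ ∀ f ∈ E', Live (rank (E', v) - 1) (E'.erase f) e.2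
    then some h.choose
    else none

lemma liveStrat_cond {E' : Finset (V × V)} {v : V} (hex : ∃ e ∈ E', e.1 = v) :
    ∃ e ∈ E', e.1 = v ∧ ∀ f ∈ E', Live (rank (E', v) - 1) (E'.erase f) e.2 := by
  have h1 : Live 1 E' v := hex
  have hr : 1 ≤ rank (E', v) := le_rank (s := (E', v)) h1
  have hlive : Live (rank (E', v)) E' v := rank_live (E', v)
  obtain ⟨k, hk⟩ : ∃ k, rank (E', v) = k + 1 := ⟨rank (E', v) - 1, by omega⟩
  rw [hk] at hlive
  rw [live_succ] at hlive
  obtain ⟨e, he, hev, hf⟩ := hlive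
  refine ⟨e, he, hev, fun f hf' => ?_⟩
  have : rank (E', v) - 1 = k := by omega
  rw [this]
  exact hf f hf'

lemma liveStrat_strat : TbStratR (V := V) liveStrat := by
  intro s hne
  obtain ⟨⟨E', v⟩, a⟩ := s
  cases a with
  | d => simp [tbActR, liveStrat]
  | r =>
    obtain ⟨x, hx⟩ := hne
    simp only [tbActR] at hx ⊢
    obtain ⟨e, he, hev, _⟩ := hx
    have hcond := liveStrat_cond ⟨e, he, hev⟩
    simp only [liveStrat, dif_pos hcond]
    obtain ⟨h1, h2, _⟩ := hcond.choose_spec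
    exact ⟨hcond.choose, h1, h2, rfl⟩

lemma liveStrat_spec {E' : Finset (V × V)} {v : V} {m : ℕ} (h : Live (m + 1) E' v) :
    ∃ e, liveStrat ((E', v), Agent.r) = some e ∧ e ∈ E' ∧ e.1 = v ∧
      ∀ f ∈ E', Live m (E'.erase f) e.2 := by
  have hex : ∃ e ∈ E', e.1 = v := by
    rw [live_succ] at h
    obtain ⟨e, he, hev, _⟩ := h
    exact ⟨e, he, hev⟩
  have hcond := liveStrat_cond hex
  have hr : m + 1 ≤ rank (E', v) := le_rank (s := (E', v)) h
  obtain ⟨h1, h2, h3⟩ := hcond.choose_spec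
  refine ⟨hcond.choose, by simp only [liveStrat, dif_pos hcond], h1, h2, fun f hf => ?_⟩
  exact live_le (by omega) _ _ (h3 f hf)

/-- Forward direction: along any play consistent with `liveStrat`, if the runner owns a
state satisfying `Live m`, the play continues for at least `2m - 1` more steps. -/
lemma reach_aux (s₀ : TbState V) (p : ℕ → Option (TbState V)) (hp : IsPlay tbStep s₀ p)
    (hc : TbConsR liveStrat p) :
    ∀ (m n : ℕ) (E' : Finset (V × V)) (v : V),
      p n = some ((E', v), Agent.r) → Live m E' v → (p (n + (2 * m - 1))).isSome := by
  intro m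
  induction m with
  | zero => intro n E' v hn _; simp [hn]
  | succ m ih =>
    intro n E' v hn hlive
    obtain ⟨e, hσ, he, hev, hf⟩ := liveStrat_spec hlive
    obtain ⟨_, hback, hmax⟩ := hp
    -- step 1 : the runner moves along e
    have hstep1 : ∃ t, tbStep ((E', v), Agent.r) t := by
      refine ⟨((E', e.2), Agent.d), some e, none, ?_, ?_, rfl⟩
      · exact ⟨e, he, hev, rfl⟩
      · simp [tbActD]
    have h1 : (p (n + 1)).isSome := hmax n _ hn hstep1
    obtain ⟨t, ht⟩ := Option.isSome_iff_exists.1 h1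
    obtain ⟨ad, har, -, htd⟩ := hc n _ _ hn ht
    rw [hσ] at htd
    have ht1 : t = ((E', e.2), Agent.d) := by rw [htd]; rfl
    subst ht1
    -- step 2 : the demon deletes some edge
    have hstep2 : ∃ t', tbStep ((E', e.2), Agent.d) t' := by
      refine ⟨((E'.erase e, e.2), Agent.r), none, some e, ?_, ?_, rfl⟩
      · simp [tbActR]
      · exact ⟨e, he, rfl⟩
    have h2 : (p (n + 1 + 1)).isSome := hmax (n + 1) _ ht hstep2
    obtain ⟨t', ht'⟩ := Option.isSome_iff_exists.1 h2
    obtain ⟨ad', -, had', htd'⟩ := hc (n + 1) _ _ ht ht'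
    have hσd : liveStrat ((E', e.2), Agent.d) = none := rfl
    rw [hσd] at htd'
    simp only [tbActD] at had'
    obtain ⟨f, hfE, hfad⟩ := had'
    subst hfad
    have ht2 : t' = ((E'.erase f, e.2), Agent.r) := by rw [htd']; rfl
    subst ht2
    -- conclude
    cases m with
    | zero => simpa using h1
    | succ m' =>
      have := ih (n + 1 + 1) (E'.erase f) e.2 ht' (hf f hfE)
      have heq : n + 1 + 1 + (2 * (m' + 1) - 1) = n + (2 * (m' + 1 + 1) - 1) := by omega
      rwa [heq] at this

/-- Prepend two states to a sequence. -/
def prepend2 {S : Type*} (s t : S) (p : ℕ → Option S) : ℕ → Option S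
  | 0 => some s
  | 1 => some t
  | n + 2 => p n

/-- Backward direction: if `Live m` fails then the demon can end any play consistent
with a given runner strategy before `2m` states are reached. -/
lemma demon_wins (σ : TbState V → Option (V × V)) (hσ : TbStratR σ) :
    ∀ (m : ℕ), 1 ≤ m → ∀ (E' : Finset (V × V)) (v : V), ¬ Live m E' v →
      ∃ p, IsPlay tbStep ((E', v), Agent.r) p ∧ TbConsR σ p ∧ p (2 * m - 1) = none := by
  intro m
  induction m with
  | zero => omega
  | succ m' ih =>
    intro _ E' v hnl
    by_cases hex : ∃ e ∈ E', e.1 = v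
    · -- the runner has a move, so m' ≥ 1 and the demon answers
      have hm' : 1 ≤ m' := by
        by_contra h
        have : m' = 0 := by omega
        subst this
        exact hnl hex
      have hne : (tbActR ((E', v), Agent.r)).Nonempty := by
        obtain ⟨e, he, hev⟩ := hex
        exact ⟨some e, e, he, hev, rfl⟩
      have hmem := hσ _ hne
      simp only [tbActR] at hmem
      obtain ⟨e, he, hev, hσe⟩ := hmem
      -- the demon's answer
      have hnl' : ∃ f ∈ E', ¬ Live m' (E'.erase f) e.2 := by
        by_contra hcon
        push_neg at hcon
        exact hnl ((live_succ m' E' v).2 ⟨e, he, hev, hcon⟩)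
      obtain ⟨f, hfE, hfnl⟩ := hnl'
      obtain ⟨p', hp', hc', hend'⟩ := ih hm' (E'.erase f) e.2 hfnl
      obtain ⟨hp'0, hp'back, hp'max⟩ := hp'
      refine ⟨prepend2 ((E', v), Agent.r) ((E', e.2), Agent.d) p', ⟨rfl, ?_, ?_⟩, ?_, ?_⟩
      · -- backward condition
        intro n t hnt
        match n with
        | 0 =>
          refine ⟨((E', v), Agent.r), rfl, some e, none, ⟨e, he, hev, rfl⟩, by simp [tbActD], ?_⟩
          simp only [prepend2] at hnt
          injection hnt with h
          rw [← h]; rfl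
        | 1 =>
          refine ⟨((E', e.2), Agent.d), rfl, none, some f, by simp [tbActR], ⟨f, hfE, rfl⟩, ?_⟩
          simp only [prepend2] at hnt
          rw [hnt] at hp'0
          injection hp'0 with h
        | n + 2 =>
          obtain ⟨s, hs, hst⟩ := hp'back n t hnt
          exact ⟨s, hs, hst⟩
      · -- maximality condition
        intro n s hns hstep
        match n with
        | 0 => simp [prepend2]
        | 1 => simp [prepend2, hp'0]
        | n + 2 => exact hp'max n s hns hstep
      · -- consistency
        intro n s t hns hnt
        match n with
        | 0 =>
          simp only [prepend2] at hns hnt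
          injection hns with hs; injection hnt with ht
          subst hs
          refine ⟨none, ?_, by simp [tbActD], ?_⟩
          · rw [hσe]; exact ⟨e, he, hev, rfl⟩
          · rw [← ht, hσe]; rfl
        | 1 =>
          simp only [prepend2] at hns hnt
          injection hns with hs
          subst hs
          rw [hnt] at hp'0
          injection hp'0 with ht
          have hσd : σ ((E', e.2), Agent.d) = none := by
            have h := hσ ((E', e.2), Agent.d) ⟨none, rfl⟩
            simpa [tbActR] using h
          refine ⟨some f, ?_, ⟨f, hfE, rfl⟩, ?_⟩
          · rw [hσd]; rfl
          · rw [ht, hσd]; rfl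
        | n + 2 => exact hc' n s t hns hnt
      · -- the play ends early
        have : 2 * (m' + 1) - 1 = (2 * m' - 1) + 2 := by omega
        rw [this]
        simpa [prepend2] using hend'
    · -- the runner has no move: the play ends immediately
      refine ⟨fun n => if n = 0 then some ((E', v), Agent.r) else none, ⟨rfl, ?_, ?_⟩, ?_, ?_⟩
      · intro n t hnt
        simp at hnt
      · intro n s hns hstep
        by_cases hn : n = 0
        · subst hn
          simp only [if_pos rfl] at hns
          injection hns with hs
          subst hs
          obtain ⟨t, ar, ad, har, -, -⟩ := hstep
          simp only [tbActR] at har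
          obtain ⟨e, he, hev, _⟩ := har
          exact absurd ⟨e, he, hev⟩ hex
        · simp [hn] at hns
      · intro n s t hns hnt
        simp at hnt
      · have : 2 * (m' + 1) - 1 ≠ 0 := by omega
        simp [this]

end Aux

/-- `Live_b(E, v₀)` (with `b ≥ 1`) holds iff there is a positional runner
strategy in `S^tb(G)` such that every play from `((E, v₀), r)` consistent with it contains
at least `2b` states, i.e. the state at index `2b - 1` exists. -/
theorem live_iff_runner_can_enforce_2b_states {V : Type*} [DecidableEq V] [Fintype V]
    (E : Finset (V × V)) (hE : E.Nonempty) (v₀ : V) (b : ℕ) (hb : 1 ≤ b) :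
    Live b E v₀ ↔
      ∃ σr : TbState V → Option (V × V), TbStratR σr ∧
        ∀ p : ℕ → Option (TbState V), IsPlay tbStep ((E, v₀), Agent.r) p → TbConsR σr p →
          (p (2 * b - 1)).isSome := by
  constructor
  · intro hlive
    refine ⟨liveStrat, liveStrat_strat, fun p hp hc => ?_⟩
    have h0 : p 0 = some ((E, v₀), Agent.r) := hp.1
    have := reach_aux _ p hp hc b 0 E v₀ h0 hlive
    simpa using this
  · rintro ⟨σ, hσ, hwin⟩
    by_contra hnl
    obtain ⟨p, hp, hc, hend⟩ := demon_wins σ hσ b hb E v₀ hnl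
    have := hwin p hp hc
    rw [hend] at this
    simp at this
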